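/- Technical q-binomial identity (Lemma 3.8): For all integers j, u and integers M, N with 0 ≤ M ≤ N, one has [M choose j-u]_q [N+1-M choose u]_q − q^{2j-2u-M+1} [M choose j-u+1]_q [N+1-M choose u-1]_q = q^u [M choose j-u]_q [N-M choose u]_q + q^{j-u-M} [N-M choose u-1]_q ([M choose j-u]_q − [M choose j-u+1]_q) − q^{2j-3u-2M+3+N} [M choose j-u+1]_q [N-M choose u-2]_q. -/
import Mathlib


/-- The q-Pochhammer symbol `(x;q)_k = ∏_{i=0}^{k-1} (1 - x q^i)`. -/
noncomputable def qp (q x : ℂ) (k : ℕ) : ℂ := ∏ i ∈ Finset.range k, (1 - x * q ^ i)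

/-- The Gaussian binomial coefficient `[N choose k]_q`, zero outside `0 ≤ k ≤ N`. -/
noncomputable def qbin (q : ℂ) (N k : ℤ) : ℂ :=
  if 0 ≤ k ∧ k ≤ N then qp q q N.toNat / (qp q q k.toNat * qp q q (N - k).toNat) else 0

lemma qp_succ (q x : ℂ) (k : ℕ) : qp q x (k + 1) = qp q x k * (1 - x * q ^ k) :=
  Finset.prod_range_succ _ _

lemma qp_zero (q x : ℂ) : qp q x 0 = 1 := rfl

lemma qbin_out (q : ℂ) (N k : ℤ) (h : k < 0 ∨ N < k) : qbin q N k = 0 := by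
  unfold qbin
  rw [if_neg]
  rintro ⟨h1, h2⟩
  omega

lemma qbin_nat (q : ℂ) (n k : ℕ) (h : k ≤ n) :
    qbin q (n : ℤ) (k : ℤ) = qp q q n / (qp q q k * qp q q (n - k)) := by
  unfold qbin
  rw [if_pos ⟨Int.natCast_nonneg k, by exact_mod_cast h⟩]
  have h1 : ((n : ℤ)).toNat = n := by omega
  have h2 : ((n : ℤ) - (k : ℤ)).toNat = n - k := by omega
  have h3 : ((k : ℤ)).toNat = k := by omega
  rw [h1, h2, h3]

/-- Pascal recurrence. -/
lemma qbin_pascal (q : ℂ) (hq0 : q ≠ 0) (n : ℕ)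
    (hne : ∀ k : ℕ, 1 ≤ k → k ≤ n + 1 → qp q q k ≠ 0) (k : ℤ) :
    qbin q ((n : ℤ) + 1) k = q ^ k * qbin q (n : ℤ) k + qbin q (n : ℤ) (k - 1) := by
  have h0 : ∀ m : ℕ, m ≤ n + 1 → qp q q m ≠ 0 := by
    intro m hm
    rcases m with _ | m
    · simp [qp_zero]
    · exact hne _ (by omega) hm
  rcases lt_or_ge k 0 with hk | hk
  · rw [qbin_out q ((n : ℤ) + 1) k (Or.inl hk), qbin_out q (n : ℤ) k (Or.inl hk), qbin_out q (n : ℤ) (k - 1) (Or.inl (by omega))]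
    ring
  obtain ⟨k', rfl⟩ := Int.eq_ofNat_of_zero_le hk
  rcases lt_or_ge (n + 1 : ℤ) (k' : ℤ) with hk2 | hk2
  · rw [qbin_out q ((n : ℤ) + 1) (k' : ℤ) (Or.inr (by omega)), qbin_out q (n : ℤ) (k' : ℤ) (Or.inr (by omega)),
      qbin_out q (n : ℤ) ((k' : ℤ) - 1) (Or.inr (by omega))]
    ring
  have hk2' : k' ≤ n + 1 := by exact_mod_cast hk2
  rcases Nat.eq_or_lt_of_le hk2' with heq | hlt
  · -- k' = n+1
    subst heq
    rw [show ((n : ℤ) + 1) = ((n + 1 : ℕ) : ℤ) by push_cast; ring,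
      show ((n + 1 : ℕ) : ℤ) - 1 = (n : ℤ) by push_cast; ring]
    rw [qbin_nat q (n+1) (n+1) le_rfl, qbin_out q (n : ℤ) ((n+1 : ℕ) : ℤ) (Or.inr (by exact_mod_cast (by omega : (n:ℤ) < ((n+1:ℕ) : ℤ)))),
      qbin_nat q n n le_rfl]
    rw [Nat.sub_self, Nat.sub_self, qp_zero, mul_one, mul_one,
      div_self (h0 (n+1) le_rfl), div_self (h0 n (by omega))]
    ring
  have hk3 : k' ≤ n := by omega
  rcases Nat.eq_zero_or_pos k' with h0' | hpos
  · subst h0'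
    rw [show ((0 : ℕ) : ℤ) - 1 = (-1 : ℤ) by ring]
    rw [qbin_out q (n : ℤ) (-1) (Or.inl (by omega))]
    rw [show ((n : ℤ) + 1) = ((n + 1 : ℕ) : ℤ) by push_cast; ring]
    rw [qbin_nat q (n+1) 0 (by omega), qbin_nat q n 0 (by omega)]
    rw [Nat.sub_zero, Nat.sub_zero, qp_zero, one_mul, one_mul,
      div_self (h0 (n+1) le_rfl), div_self (h0 n (by omega))]
    simp
  -- generic case 1 ≤ k' ≤ n
  obtain ⟨m, rfl⟩ : ∃ m, k' = m + 1 := ⟨k' - 1, by omega⟩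
  obtain ⟨p, rfl⟩ : ∃ p, n = m + 1 + p := ⟨n - m - 1, by omega⟩
  rw [show ((m + 1 + p : ℕ) : ℤ) + 1 = ((m + p + 2 : ℕ) : ℤ) by push_cast; ring,
    show ((m + 1 : ℕ) : ℤ) - 1 = ((m : ℕ) : ℤ) by push_cast; ring]
  rw [qbin_nat q (m+p+2) (m+1) (by omega), qbin_nat q (m+1+p) (m+1) (by omega),
    qbin_nat q (m+1+p) m (by omega)]
  rw [show (m+p+2) - (m+1) = p + 1 by omega, show (m+1+p) - (m+1) = p by omega,
    show (m+1+p) - m = p + 1 by omega]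
  rw [show (m+p+2) = (m+1+p)+1 by omega]
  rw [qp_succ q q (m+1+p), qp_succ q q m, qp_succ q q p]
  have hqpm : qp q q m ≠ 0 := h0 m (by omega)
  have hqpp : qp q q p ≠ 0 := h0 p (by omega)
  have hqpn : qp q q (m+1+p) ≠ 0 := h0 _ (by omega)
  have hfm : (1 - q * q ^ m) ≠ 0 := by
    have := h0 (m+1) (by omega); rw [qp_succ] at this
    exact fun h => this (by rw [h, mul_zero])
  have hfp : (1 - q * q ^ p) ≠ 0 := by
    have := h0 (p+1) (by omega); rw [qp_succ] at this
    exact fun h => this (by rw [h, mul_zero])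
  rw [zpow_natCast]
  field_simp
  ring

/-- Ratio identity: (1 - q^(k+1)) [n, k+1] = (1 - q^(n-k)) [n, k]. -/
lemma qbin_ratio (q : ℂ) (hq0 : q ≠ 0) (n : ℕ)
    (hne : ∀ k : ℕ, 1 ≤ k → k ≤ n + 1 → qp q q k ≠ 0) (k : ℤ) :
    (1 - q ^ (k + 1)) * qbin q (n : ℤ) (k + 1) = (1 - q ^ ((n : ℤ) - k)) * qbin q (n : ℤ) k := by
  have h0 : ∀ m : ℕ, m ≤ n + 1 → qp q q m ≠ 0 := by
    intro m hm
    rcases m with _ | m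
    · simp [qp_zero]
    · exact hne _ (by omega) hm
  rcases lt_or_ge k (-1) with hk | hk
  · rw [qbin_out q (n : ℤ) (k + 1) (Or.inl (by omega)), qbin_out q (n : ℤ) k (Or.inl (by omega))]; ring
  rcases eq_or_lt_of_le hk with heq | hk1
  · rw [← heq, qbin_out q (n : ℤ) (-1) (Or.inl (by omega)), mul_zero]
    norm_num
  have hk0 : 0 ≤ k := by omega
  obtain ⟨k', rfl⟩ := Int.eq_ofNat_of_zero_le hk0
  rcases lt_or_ge ((n : ℤ)) (k' : ℤ) with hk2 | hk2
  · rw [qbin_out q (n : ℤ) ((k' : ℤ) + 1) (Or.inr (by omega)), qbin_out q (n : ℤ) (k' : ℤ) (Or.inr (by omega))]; ring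
  have hk2' : k' ≤ n := by exact_mod_cast hk2
  rcases Nat.eq_or_lt_of_le hk2' with heq | hlt
  · subst heq
    rw [qbin_out q (k' : ℤ) ((k' : ℤ) + 1) (Or.inr (by omega)), show ((k' : ℤ) - (k' : ℤ)) = 0 by ring]
    norm_num
  -- generic: k' < n
  obtain ⟨p, rfl⟩ : ∃ p, n = k' + 1 + p := ⟨n - k' - 1, by omega⟩
  rw [show ((k' : ℕ) : ℤ) + 1 = ((k' + 1 : ℕ) : ℤ) by push_cast; ring]
  rw [show ((k' + 1 + p : ℕ) : ℤ) - ((k' : ℕ) : ℤ) = ((p + 1 : ℕ) : ℤ) by push_cast; ring]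
  rw [qbin_nat q (k'+1+p) (k'+1) (by omega), qbin_nat q (k'+1+p) k' (by omega)]
  rw [show (k'+1+p) - (k'+1) = p by omega, show (k'+1+p) - k' = p + 1 by omega]
  rw [qp_succ q q k', qp_succ q q p]
  have hqpk : qp q q k' ≠ 0 := h0 k' (by omega)
  have hqpp : qp q q p ≠ 0 := h0 p (by omega)
  have hqpn : qp q q (k'+1+p) ≠ 0 := h0 _ (by omega)
  have hfk : (1 - q * q ^ k') ≠ 0 := by
    have := h0 (k'+1) (by omega); rw [qp_succ] at this
    exact fun h => this (by rw [h, mul_zero])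
  have hfp : (1 - q * q ^ p) ≠ 0 := by
    have := h0 (p+1) (by omega); rw [qp_succ] at this
    exact fun h => this (by rw [h, mul_zero])
  rw [zpow_natCast, zpow_natCast]
  field_simp
  ring

/-- Technical q-binomial identity (Lemma 3.8). -/
theorem tech_qbinom_one (q : ℂ) (hq0 : q ≠ 0) (N M : ℕ) (hM : M ≤ N)
    (hq : ∀ k : ℕ, 1 ≤ k → k ≤ N + 1 → qp q q k ≠ 0) (j u : ℤ) :
    qbin q M (j - u) * qbin q ((N : ℤ) + 1 - M) u
      - q ^ (2 * j - 2 * u - (M : ℤ) + 1) * qbin q M (j - u + 1) * qbin q ((N : ℤ) + 1 - M) (u - 1)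
    = q ^ u * qbin q M (j - u) * qbin q ((N : ℤ) - M) u
      + q ^ (j - u - (M : ℤ)) * qbin q ((N : ℤ) - M) (u - 1)
          * (qbin q M (j - u) - qbin q M (j - u + 1))
      - q ^ (2 * j - 3 * u - 2 * (M : ℤ) + 3 + N) * qbin q M (j - u + 1)
          * qbin q ((N : ℤ) - M) (u - 2) := by
  set n : ℕ := N - M with hn
  have hNn : N = M + n := by omega
  have hneM : ∀ k : ℕ, 1 ≤ k → k ≤ M + 1 → qp q q k ≠ 0 :=
    fun k h1 h2 => hq k h1 (by omega)
  have hnen : ∀ k : ℕ, 1 ≤ k → k ≤ n + 1 → qp q q k ≠ 0 :=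
    fun k h1 h2 => hq k h1 (by omega)
  have hn1 : (N : ℤ) + 1 - (M : ℤ) = (n : ℤ) + 1 := by push_cast; omega
  have hn2 : (N : ℤ) - (M : ℤ) = (n : ℤ) := by push_cast; omega
  rw [hn1, hn2]
  have P1 := qbin_pascal q hq0 n hnen u
  have P2 := qbin_pascal q hq0 n hnen (u - 1)
  rw [show u - 1 - 1 = u - 2 by ring] at P2
  have R1 := qbin_ratio q hq0 M hneM (j - u)
  have R2 := qbin_ratio q hq0 n hnen (u - 2)
  rw [show u - 2 + 1 = u - 1 by ring] at R2
  rw [P1, P2]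
  -- nonvanishing atoms
  have hu0 : (q : ℂ) ^ u ≠ 0 := zpow_ne_zero _ hq0
  have hm0 : (q : ℂ) ^ M ≠ 0 := pow_ne_zero _ hq0
  -- zpow product decompositions
  have E1 : q ^ (2 * j - 2 * u - (M : ℤ) + 1) * (q ^ u * q ^ u * q ^ M) = q ^ j * q ^ j * q ^ (1 : ℕ) := by
    simp only [← zpow_natCast q, ← zpow_add₀ hq0]
    congr 1; push_cast; ring
  have E2 : q ^ (j - u - (M : ℤ)) * (q ^ u * q ^ M) = q ^ j := by
    simp only [← zpow_natCast q, ← zpow_add₀ hq0]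
    congr 1; push_cast; ring
  have E3 : q ^ (2 * j - 3 * u - 2 * (M : ℤ) + 3 + N) * (q ^ u * q ^ u * q ^ u * q ^ M) =
      q ^ j * q ^ j * q ^ (3 : ℕ) * q ^ n := by
    simp only [← zpow_natCast q, ← zpow_add₀ hq0]
    congr 1; push_cast [hNn]; ring
  have E4 : q ^ (j - u + 1) * q ^ u = q ^ j * q ^ (1 : ℕ) := by
    simp only [← zpow_natCast q, ← zpow_add₀ hq0]
    congr 1; push_cast; ring
  have E5 : q ^ ((M : ℤ) - (j - u)) * q ^ j = q ^ M * q ^ u := by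
    simp only [← zpow_natCast q, ← zpow_add₀ hq0]
    congr 1; push_cast; ring
  have E6 : q ^ ((n : ℤ) - (u - 2)) * q ^ u = q ^ n * q ^ (2 : ℕ) := by
    simp only [← zpow_natCast q, ← zpow_add₀ hq0]
    congr 1; push_cast; ring
  have E7 : q ^ (u - 1) * q ^ (1 : ℕ) = q ^ u := by
    simp only [← zpow_natCast q, ← zpow_add₀ hq0]
    congr 1; push_cast; ring
  set A := qbin q (M : ℤ) (j - u) with hA
  set B := qbin q (M : ℤ) (j - u + 1) with hB
  set X0 := qbin q (n : ℤ) u with hX0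
  set X1 := qbin q (n : ℤ) (u - 1) with hX1
  set X2 := qbin q (n : ℤ) (u - 2) with hX2
  have R1c : (q ^ u - q ^ j * q ^ (1 : ℕ)) * B * q ^ j = (q ^ j - q ^ M * q ^ u) * A * q ^ u := by
    linear_combination (q ^ j * q ^ u) * R1 + (q ^ j * B) * E4 - (q ^ u * A) * E5
  have R2c : (q ^ (1 : ℕ) - q ^ u) * X1 * q ^ u = (q ^ u - q ^ n * q ^ (2 : ℕ)) * X2 * q ^ (1 : ℕ) := by
    linear_combination (q ^ (1 : ℕ) * q ^ u) * R2 + (q ^ u * X1) * E7 - (q ^ (1 : ℕ) * X2) * E6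
  apply mul_left_cancel₀
    (show ((q ^ u) ^ 3 * q ^ M * q ^ (1 : ℕ) : ℂ) ≠ 0 from
      mul_ne_zero (mul_ne_zero (pow_ne_zero 3 hu0) hm0) (pow_ne_zero 1 hq0))
  linear_combination
    (-(q ^ u * q ^ (1 : ℕ) * q ^ (u - 1) * B * X1 + q ^ u * q ^ (1 : ℕ) * B * X2)) * E1
    - ((q ^ u) ^ 2 * q ^ (1 : ℕ) * A * X1 - (q ^ u) ^ 2 * q ^ (1 : ℕ) * B * X1) * E2
    + (q ^ (1 : ℕ) * B * X2) * E3
    - ((q ^ j) ^ 2 * q ^ u * q ^ (1 : ℕ) * B * X1) * E7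
    + (q ^ u * q ^ (1 : ℕ) * X1) * R1c
    + ((q ^ j) ^ 2 * q ^ (1 : ℕ) * B) * R2c
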